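/- arXiv:1007.0714 — 2 statements merged into one kernel-verified Lean document; each statement's English description precedes it below -/
import Mathlib

section
/- If f : I → ℝ solves the restricted Cauchy equation f(x+x') = f(x) + f(x') for all x, x', x+x' ∈ I, and f is monotone, then there exists c ∈ ℝ such that f(x) = c·x for all x ∈ I. -/
open Set Filter

/-!
Additivity gives `f (k / n * v) = k / n * f v` whenever `0 ≤ k ≤ n` and `v ∈ I`, and monotonicity
squeezes `f (s * v)` between the values at the fractions `⌊s n⌋ / n` and `⌈s n⌉ / n`, so
`f (s * v) = s * f v` for all `s ∈ [0, 1]`. Together with `f (-x) = -f x` this makes `f x / x`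
independent of `x ∈ I \ {0}`.
-/

section UnitInterval

variable {g : ℝ → ℝ} (hfrac : ∀ n : ℕ, 0 < n → ∀ k ≤ n, g (k / n) = k / n * g 1)
include hfrac

lemma abs_sub_mul_le_div_of_monotoneOn (hg : MonotoneOn g (Icc 0 1)) {s : ℝ} (hs : s ∈ Icc 0 1)
    {n : ℕ} (hn : 0 < n) : |g s - s * g 1| ≤ g 1 / n := by
  have hg0 : g 0 = 0 := by simpa using hfrac 1 one_pos 0 (Nat.zero_le _)
  have hg1 : 0 ≤ g 1 := hg0 ▸ hg ⟨le_rfl, zero_le_one⟩ ⟨zero_le_one, le_rfl⟩ zero_le_one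
  have hn' : (0 : ℝ) < n := Nat.cast_pos.2 hn
  have hsn : s * n ≤ n := mul_le_of_le_one_left hn'.le hs.2
  have hfrac_mem : ∀ k ≤ n, (k / n : ℝ) ∈ Icc 0 1 := fun k hk =>
    ⟨by positivity, div_le_one_of_le₀ (Nat.cast_le.2 hk) hn'.le⟩
  rw [abs_sub_le_iff]
  constructor
  · have hkn : ⌈s * n⌉₊ ≤ n := Nat.ceil_le.2 hsn
    have hsk : s ≤ ⌈s * n⌉₊ / n := (le_div_iff₀ hn').2 (Nat.le_ceil _)
    have hks : (⌈s * n⌉₊ / n : ℝ) - s ≤ 1 / n := by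
      rw [div_sub' hn'.ne', div_le_div_iff_of_pos_right hn']
      linarith [Nat.ceil_lt_add_one (mul_nonneg hs.1 hn'.le)]
    calc g s - s * g 1 ≤ ⌈s * n⌉₊ / n * g 1 - s * g 1 := by
          rw [← hfrac n hn _ hkn]
          exact sub_le_sub_right (hg hs (hfrac_mem _ hkn) hsk) _
      _ = (⌈s * n⌉₊ / n - s) * g 1 := by ring
      _ ≤ 1 / n * g 1 := mul_le_mul_of_nonneg_right hks hg1
      _ = g 1 / n := by ring
  · have hkn : ⌊s * n⌋₊ ≤ n := Nat.floor_le_of_le hsn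
    have hks : (⌊s * n⌋₊ / n : ℝ) ≤ s :=
      (div_le_iff₀ hn').2 (Nat.floor_le (mul_nonneg hs.1 hn'.le))
    have hsk : s - ⌊s * n⌋₊ / n ≤ 1 / n := by
      rw [sub_div' hn'.ne', div_le_div_iff_of_pos_right hn']
      linarith [Nat.lt_floor_add_one (s * n)]
    calc s * g 1 - g s ≤ s * g 1 - ⌊s * n⌋₊ / n * g 1 := by
          rw [← hfrac n hn _ hkn]
          exact sub_le_sub_left (hg (hfrac_mem _ hkn) hs hks) _
      _ = (s - ⌊s * n⌋₊ / n) * g 1 := by ring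
      _ ≤ 1 / n * g 1 := mul_le_mul_of_nonneg_right hsk hg1
      _ = g 1 / n := by ring

lemma eq_mul_of_monotoneOn_of_forall_div_nat (hg : MonotoneOn g (Icc 0 1)) {s : ℝ}
    (hs : s ∈ Icc 0 1) : g s = s * g 1 := by
  have hlim : |g s - s * g 1| ≤ 0 :=
    ge_of_tendsto (tendsto_const_div_atTop_nhds_zero_nat (g 1))
      (eventually_atTop.2 ⟨1, fun _ hn => abs_sub_mul_le_div_of_monotoneOn hfrac hg hs hn⟩)
  exact sub_eq_zero.1 (abs_nonpos_iff.1 hlim)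

lemma eq_mul_of_monotoneOn_or_antitoneOn_of_forall_div_nat
    (hg : MonotoneOn g (Icc 0 1) ∨ AntitoneOn g (Icc 0 1)) {s : ℝ} (hs : s ∈ Icc 0 1) :
    g s = s * g 1 := by
  rcases hg with hg | hg
  · exact eq_mul_of_monotoneOn_of_forall_div_nat hfrac hg hs
  · have h := eq_mul_of_monotoneOn_of_forall_div_nat (g := fun x => -g x)
      (fun n hn k hk => by simp only [hfrac n hn k hk, mul_neg]) hg.neg hs
    linarith

end UnitInterval

lemma monotoneOn_or_antitoneOn_comp_mul_right {I : Set ℝ} {f : ℝ → ℝ} (hI : StarConvex ℝ 0 I)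
    (hf : MonotoneOn f I ∨ AntitoneOn f I) {v : ℝ} (hv : v ∈ I) :
    MonotoneOn (fun s => f (s * v)) (Icc 0 1) ∨ AntitoneOn (fun s => f (s * v)) (Icc 0 1) := by
  have hmaps : MapsTo (· * v) (Icc 0 1) I := fun s hs => hI.smul_mem hv hs.1 hs.2
  rcases le_total 0 v with hv0 | hv0 <;> rcases hf with hf | hf
  · exact .inl (hf.comp ((monotone_mul_right_of_nonneg hv0).monotoneOn _) hmaps)
  · exact .inr (hf.comp_MonotoneOn ((monotone_mul_right_of_nonneg hv0).monotoneOn _) hmaps)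
  · exact .inr (hf.comp_AntitoneOn ((antitone_mul_right hv0).antitoneOn _) hmaps)
  · exact .inl (hf.comp ((antitone_mul_right hv0).antitoneOn _) hmaps)

def IsAdditiveOn (I : Set ℝ) (f : ℝ → ℝ) : Prop :=
  ∀ x ∈ I, ∀ x' ∈ I, x + x' ∈ I → f (x + x') = f x + f x'

namespace IsAdditiveOn

variable {I : Set ℝ} {f : ℝ → ℝ}

lemma map_zero (hf : IsAdditiveOn I f) (h0 : 0 ∈ I) : f 0 = 0 := by
  simpa using hf 0 h0 0 h0 (by rwa [add_zero])

lemma map_nat_mul (hf : IsAdditiveOn I f) (hI : StarConvex ℝ 0 I) :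
    ∀ (k : ℕ) {x : ℝ}, (k : ℝ) * x ∈ I → f (k * x) = k * f x
  | 0, x, hx => by
    simp only [Nat.cast_zero, zero_mul] at hx ⊢
    exact hf.map_zero hx
  | k + 1, x, hx => by
    have hk : (0 : ℝ) < k + 1 := by positivity
    have hmem : ∀ j : ℕ, j ≤ k + 1 → (j : ℝ) * x ∈ I := fun j hj => by
      rw [show (j : ℝ) * x = j / (k + 1) * ((k + 1 : ℕ) * x) by push_cast; field_simp]
      exact hI.smul_mem hx (by positivity) (div_le_one_of_le₀ (by exact_mod_cast hj) hk.le)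
    have hkx := hmem k k.le_succ
    have hx1 : x ∈ I := by simpa using hmem 1 (by omega)
    push_cast at hx ⊢
    rw [add_one_mul, hf _ hkx _ hx1 (by rwa [← add_one_mul]), map_nat_mul hf hI k hkx]
    ring

lemma map_div_nat_mul (hf : IsAdditiveOn I f) (hI : StarConvex ℝ 0 I) {v : ℝ} (hv : v ∈ I)
    {n k : ℕ} (hn : 0 < n) (hk : k ≤ n) : f (k / n * v) = k / n * f v := by
  have hn' : (0 : ℝ) < n := Nat.cast_pos.2 hn
  have hfv : f v = n * f (v / n) := by
    rw [← hf.map_nat_mul hI n (by rwa [mul_div_cancel₀ _ hn'.ne']), mul_div_cancel₀ _ hn'.ne']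
  have hkv : (k : ℝ) * (v / n) ∈ I := by
    rw [← mul_div_assoc, mul_div_right_comm]
    exact hI.smul_mem hv (by positivity) (div_le_one_of_le₀ (Nat.cast_le.2 hk) hn'.le)
  rw [show (k : ℝ) / n * v = k * (v / n) by ring, hf.map_nat_mul hI k hkv, hfv]
  field_simp

variable (hf : IsAdditiveOn I f) (hI : StarConvex ℝ 0 I) (hmono : MonotoneOn f I ∨ AntitoneOn f I)
include hf hI hmono

lemma map_mul_of_mem_Icc {v s : ℝ} (hv : v ∈ I) (hs : s ∈ Icc 0 1) : f (s * v) = s * f v := by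
  have h := eq_mul_of_monotoneOn_or_antitoneOn_of_forall_div_nat
    (fun n hn k hk => by simpa only [one_mul] using hf.map_div_nat_mul hI hv hn hk)
    (monotoneOn_or_antitoneOn_comp_mul_right hI hmono hv) hs
  simpa only [one_mul] using h

lemma map_mul_of_abs_le_one {v s : ℝ} (hv : v ∈ I) (hs : |s| ≤ 1) (hsv : s * v ∈ I) :
    f (s * v) = s * f v := by
  rcases le_total 0 s with hs0 | hs0
  · exact hf.map_mul_of_mem_Icc hI hmono hv ⟨hs0, (le_abs_self s).trans hs⟩
  · have hneg : -s ∈ Icc (0 : ℝ) 1 := ⟨neg_nonneg.2 hs0, (neg_le_abs s).trans hs⟩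
    have h0 : (0 : ℝ) ∈ I := hI.mem ⟨v, hv⟩
    have hnegv : -s * v ∈ I := hI.smul_mem hv hneg.1 hneg.2
    have hsum := hf _ hsv _ hnegv (by rwa [neg_mul, add_neg_cancel])
    rw [neg_mul, add_neg_cancel, hf.map_zero h0, ← neg_mul,
      hf.map_mul_of_mem_Icc hI hmono hv hneg] at hsum
    linarith

lemma apply_mul_eq_apply_mul {x y : ℝ} (hx : x ∈ I) (hy : y ∈ I) : f x * y = f y * x := by
  wlog hxy : |x| ≤ |y| generalizing x y
  · exact (this hy hx (le_of_not_ge hxy)).symm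
  rcases eq_or_ne y 0 with rfl | hy0
  · rw [abs_zero, abs_nonpos_iff] at hxy
    rw [hxy]
  · have hs : |x / y| ≤ 1 := by
      rw [abs_div]
      exact div_le_one_of_le₀ hxy (abs_nonneg y)
    have hx' : x / y * y = x := div_mul_cancel₀ x hy0
    have h := hf.map_mul_of_abs_le_one hI hmono hy hs (hx'.symm ▸ hx)
    rw [hx'] at h
    rw [h]
    field_simp

end IsAdditiveOn

theorem cauchy_interval_monotone_general (I : Set ℝ) (hI : I.OrdConnected)
    (h0 : (0 : ℝ) ∈ I) (f : ℝ → ℝ)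
    (hadd : ∀ x ∈ I, ∀ x' ∈ I, x + x' ∈ I → f (x + x') = f x + f x')
    (hmono : MonotoneOn f I ∨ AntitoneOn f I) :
    ∃ c : ℝ, ∀ x ∈ I, f x = c * x := by
  have hf : IsAdditiveOn I f := hadd
  have hstar : StarConvex ℝ 0 I := hI.convex.starConvex h0
  by_cases hne : ∃ x₀ ∈ I, x₀ ≠ 0
  · obtain ⟨x₀, hx₀, hx₀ne⟩ := hne
    refine ⟨f x₀ / x₀, fun x hx => ?_⟩
    rw [div_mul_eq_mul_div, eq_div_iff hx₀ne, hf.apply_mul_eq_apply_mul hstar hmono hx hx₀]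
  · push Not at hne
    exact ⟨0, fun x hx => by rw [hne x hx, zero_mul, hf.map_zero h0]⟩

/-- If `f : I → ℝ` solves the restricted Cauchy equation and is
monotone on `I`, then `f(x) = c·x` on `I`. -/
theorem cauchy_interval_monotone (I : Set ℝ) (hI : I.OrdConnected)
    (h0 : (0 : ℝ) ∈ I) (hnt : ∃ x ∈ I, x ≠ 0) (f : ℝ → ℝ)
    (hadd : ∀ x ∈ I, ∀ x' ∈ I, x + x' ∈ I → f (x + x') = f x + f x')
    (hmono : MonotoneOn f I ∨ AntitoneOn f I) :
    ∃ c : ℝ, ∀ x ∈ I, f x = c * x :=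
  cauchy_interval_monotone_general I hI h0 f hadd hmono
end

section
/- Assume I = ℝ or 0 ∈ I ⊆ [0,∞). A function f : Iⁿ → ℝ is comonotonically additive if and only if it is horizontally min-additive. -/
/-- `f` is horizontally min-additive on `Iⁿ`. -/
def HorizMinAdd {n : ℕ} (I : Set ℝ) (f : (Fin n → ℝ) → ℝ) : Prop :=
  ∀ x : Fin n → ℝ, (∀ i, x i ∈ I) → ∀ c ∈ I, (∀ i, x i - min (x i) c ∈ I) →
    f x = f (fun i => min (x i) c) + f (fun i => x i - min (x i) c)

/-- `x` and `y` are comonotonic `n`-tuples. -/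
def Comonotone {n : ℕ} (x y : Fin n → ℝ) : Prop :=
  ∃ σ : Equiv.Perm (Fin n), Monotone (x ∘ σ) ∧ Monotone (y ∘ σ)

/-- `f` is comonotonically additive on `Iⁿ`. -/
def ComonAdd {n : ℕ} (I : Set ℝ) (f : (Fin n → ℝ) → ℝ) : Prop :=
  ∀ x y : Fin n → ℝ, (∀ i, x i ∈ I) → (∀ i, y i ∈ I) → (∀ i, x i + y i ∈ I) →
    Comonotone x y → f (x + y) = f x + f y

/-!
Cutting a tuple `x` at a level `c` yields the comonotonic pair `x ∧ c`, `x - x ∧ c`, which gives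
one direction. Conversely, cut a comonotonic pair `x, y` at its second-highest level, i.e. at
`x i₂, y i₂` where `x i₂ + y i₂` is the second largest value of `x + y`. The lower parts are
again comonotonic, with sum `(x + y) ∧ (x i₂ + y i₂)`, which takes one value fewer than `x + y`;
the three remainders are nonnegative multiples of the indicator of the top level set, where
horizontal min-additivity is plain additivity. Induction on the number of values of `x + y`
thus reduces everything to constant tuples, where `f c = f a + f (c - a)` for `a ≤ c` gives
additivity (through `f 0 = 0` when both summands are negative).
-/

open Finset

section LinearOrder

variable {ι α : Type*} [LinearOrder α]

theorem exists_two_largest_values [Fintype ι] {g : ι → α} {i j : ι} (hij : g i < g j) :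
    ∃ i₁ i₂, g i₂ < g i₁ ∧ ∀ i, g i ≤ g i₂ ∨ g i = g i₁ := by
  obtain ⟨i₁, -, hi₁⟩ := exists_max_image univ g ⟨i, mem_univ i⟩
  obtain ⟨i₂, hi₂, hmax⟩ := exists_max_image {k | g k < g i₁} g
    ⟨i, by simpa using hij.trans_le (hi₁ j (mem_univ j))⟩
  refine ⟨i₁, i₂, (mem_filter.1 hi₂).2, fun k => ?_⟩
  rcases (hi₁ k (mem_univ k)).lt_or_eq with hk | hk
  · exact Or.inl (hmax k (by simpa using hk))
  · exact Or.inr hk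

theorem card_image_min_lt_card_image [Fintype ι] [DecidableEq α] {g : ι → α} {j k : ι}
    (hjk : g j < g k) : #(univ.image fun i => min (g i) (g j)) < #(univ.image g) := by
  refine card_lt_card ((ssubset_iff_of_subset ?_).2 ⟨g k, mem_image_of_mem g (mem_univ k), ?_⟩)
  · intro v hv
    obtain ⟨i, -, rfl⟩ := mem_image.1 hv
    rcases min_choice (g i) (g j) with h | h <;> rw [h] <;> exact mem_image_of_mem g (mem_univ _)
  · intro hk
    obtain ⟨i, -, hi⟩ := mem_image.1 hk
    exact (min_le_right (g i) (g j)).not_gt (hi ▸ hjk)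

theorem sub_min_eq_indicator [AddGroup α] {x : ι → α} {T : Set ι} {a b : α} (hab : a ≤ b)
    (hT : ∀ i ∈ T, x i = b) (hTc : ∀ i ∉ T, x i ≤ a) : (fun i => x i - min (x i) a) = T.indicator fun _ => b - a := by
  funext i
  by_cases hi : i ∈ T
  · rw [hT i hi, min_eq_right hab, Set.indicator_of_mem hi]
  · rw [min_eq_left (hTc i hi), sub_self, Set.indicator_of_notMem hi]

end LinearOrder

section OrderedGroup

variable {ι α : Type*} [AddCommGroup α] [LinearOrder α] [IsOrderedAddMonoid α] {x y : ι → α}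

theorem monotone_sub_min (c : α) : Monotone fun t : α => t - min t c := by
  intro s t hst
  dsimp only
  rcases le_total s c with hs | hs <;> rcases le_total t c with ht | ht
  · rw [min_eq_left hs, min_eq_left ht, sub_self, sub_self]
  · rw [min_eq_left hs, min_eq_right ht, sub_self]
    exact sub_nonneg.2 ht
  · rw [min_eq_right hs, min_eq_left ht, sub_self]
    exact sub_nonpos.2 (hst.trans ht)
  · rw [min_eq_right hs, min_eq_right ht]
    exact sub_le_sub_right hst c

theorem Monovary.le_of_add_le_add (h : Monovary x y) {i j : ι} (hij : x i + y i ≤ x j + y j) :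
    x i ≤ x j := by
  by_contra! hji
  exact hij.not_gt (add_lt_add_of_lt_of_le hji (h.symm hji))

theorem Monovary.le_of_add_le_add' (h : Monovary x y) {i j : ι} (hij : x i + y i ≤ x j + y j) :
    y i ≤ y j :=
  h.symm.le_of_add_le_add (by rwa [add_comm (y i), add_comm (y j)])

theorem Monovary.eq_of_add_eq_add (h : Monovary x y) {i j : ι} (hij : x i + y i = x j + y j) :
    x i = x j :=
  le_antisymm (h.le_of_add_le_add hij.le) (h.le_of_add_le_add hij.ge)

theorem Monovary.eq_of_add_eq_add' (h : Monovary x y) {i j : ι} (hij : x i + y i = x j + y j) :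
    y i = y j :=
  le_antisymm (h.le_of_add_le_add' hij.le) (h.le_of_add_le_add' hij.ge)

theorem Monovary.min_add_min (h : Monovary x y) (i j : ι) :
    min (x i) (x j) + min (y i) (y j) = min (x i + y i) (x j + y j) := by
  rcases le_total (x i + y i) (x j + y j) with hij | hji
  · rw [min_eq_left (h.le_of_add_le_add hij), min_eq_left (h.le_of_add_le_add' hij),
      min_eq_left hij]
  · rw [min_eq_right (h.le_of_add_le_add hji), min_eq_right (h.le_of_add_le_add' hji),
      min_eq_right hji]

end OrderedGroup

theorem comonotone_comp_comp {n : ℕ} (x : Fin n → ℝ) {φ ψ : ℝ → ℝ} (hφ : Monotone φ)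
    (hψ : Monotone ψ) : Comonotone (φ ∘ x) (ψ ∘ x) :=
  ⟨Tuple.sort x, hφ.comp (Tuple.monotone_sort x), hψ.comp (Tuple.monotone_sort x)⟩

theorem Comonotone.monovary {n : ℕ} {x y : Fin n → ℝ} (h : Comonotone x y) : Monovary x y := by
  obtain ⟨σ, hx, hy⟩ := h
  simpa [Function.comp_def] using (hx.monovary hy).comp_right σ.symm

theorem sub_mem_of_ordConnected {I : Set ℝ} (hI : I.OrdConnected) (h0 : (0 : ℝ) ∈ I)
    (hcase : I = Set.univ ∨ I ⊆ Set.Ici 0) {u v : ℝ} (hu : u ∈ I) (hv : v ∈ I) (hvu : v ≤ u) :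
    u - v ∈ I := by
  rcases hcase with rfl | hpos
  · trivial
  · exact hI.out h0 hu ⟨sub_nonneg.2 hvu, sub_le_self u (hpos hv)⟩

theorem ComonAdd.horizMinAdd {n : ℕ} {I : Set ℝ} {f : (Fin n → ℝ) → ℝ} (hf : ComonAdd I f) :
    HorizMinAdd I f := by
  intro x hx c hc hrem
  have hsplit : (fun i => min (x i) c) + (fun i => x i - min (x i) c) = x :=
    funext fun i => add_sub_cancel (min (x i) c) (x i)
  have hcomon := comonotone_comp_comp x (fun _ _ h => min_le_min_right c h) (monotone_sub_min c)
  have := hf _ _ (fun i => min_rec' (· ∈ I) (hx i) hc) hrem (by simpa only [add_sub_cancel] using hx) hcomon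
  rwa [hsplit] at this

namespace HorizMinAdd

variable {n : ℕ} {I : Set ℝ} {f : (Fin n → ℝ) → ℝ}

theorem map_split (hf : HorizMinAdd I f) (hsub : ∀ u ∈ I, ∀ v ∈ I, v ≤ u → u - v ∈ I)
    {x : Fin n → ℝ} (hx : ∀ i, x i ∈ I) {c : ℝ} (hc : c ∈ I) :
    f x = f (fun i => min (x i) c) + f (fun i => x i - min (x i) c) :=
  hf x hx c hc fun i => hsub _ (hx i) _ (min_rec' (· ∈ I) (hx i) hc) (min_le_left _ _)

theorem map_const_add (hf : HorizMinAdd I f) (h0 : (0 : ℝ) ∈ I)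
    (hsub : ∀ u ∈ I, ∀ v ∈ I, v ≤ u → u - v ∈ I) {a b : ℝ} (ha : a ∈ I) (hb : b ∈ I)
    (hab : a + b ∈ I) : f (fun _ => a + b) = f (fun _ => a) + f (fun _ => b) := by
  have split : ∀ u ∈ I, ∀ c ∈ I, c ≤ u → f (fun _ => u) = f (fun _ => c) + f (fun _ => u - c) := by
    intro u hu c hc hcu
    simpa only [min_eq_right hcu] using hf.map_split hsub (fun _ => hu) hc
  rcases le_total 0 b with hb0 | hb0
  · simpa using split _ hab _ ha (le_add_of_nonneg_right hb0)
  rcases le_total 0 a with ha0 | ha0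
  · simpa [add_comm] using split _ hab _ hb (le_add_of_nonneg_left ha0)
  have h1 := split a ha (a + b) hab (add_le_of_nonpos_right hb0)
  have h2 := split 0 h0 b hb hb0
  have h3 := split 0 h0 0 h0 le_rfl
  simp only [sub_add_cancel_left, zero_sub, sub_self] at h1 h2 h3
  linarith

theorem map_indicator_add (hf : HorizMinAdd I f) (h0 : (0 : ℝ) ∈ I)
    (hsub : ∀ u ∈ I, ∀ v ∈ I, v ≤ u → u - v ∈ I) (T : Set (Fin n)) {s t : ℝ} (hs : s ∈ I)
    (hst : s + t ∈ I) (hs0 : 0 ≤ s) (ht0 : 0 ≤ t) :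
    f (T.indicator fun _ => s + t) = f (T.indicator fun _ => s) + f (T.indicator fun _ => t) := by
  have hmem : ∀ i, T.indicator (fun _ => s + t) i ∈ I := fun i => by
    by_cases hi : i ∈ T <;> simp [hi, hst, h0]
  have hlow : (fun i => min (T.indicator (fun _ => s + t) i) s) = T.indicator fun _ => s := by
    funext i
    by_cases hi : i ∈ T <;> simp [hi, hs0, ht0]
  have hhigh : (fun i => T.indicator (fun _ => s + t) i - min (T.indicator (fun _ => s + t) i) s)
      = T.indicator fun _ => t := by
    funext i
    by_cases hi : i ∈ T <;> simp [hi, hs0, ht0]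
  rw [hf.map_split hsub hmem hs, hlow, hhigh]

theorem map_add_of_forall_add_le (hf : HorizMinAdd I f) (h0 : (0 : ℝ) ∈ I)
    (hsub : ∀ u ∈ I, ∀ v ∈ I, v ≤ u → u - v ∈ I) {x y : Fin n → ℝ} (hxy : Monovary x y)
    (hx : ∀ i, x i ∈ I) (hy : ∀ i, y i ∈ I) (hxy' : ∀ i, x i + y i ∈ I)
    (hconst : ∀ i j, x i + y i ≤ x j + y j) : f (x + y) = f x + f y := by
  rcases isEmpty_or_nonempty (Fin n) with hn | ⟨⟨i₀⟩⟩
  · rw [Subsingleton.elim x fun _ => 0, Subsingleton.elim y fun _ => 0]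
    exact hf.map_const_add h0 hsub h0 h0 (by rwa [add_zero])
  have hxc : x = fun _ => x i₀ :=
    funext fun i => hxy.eq_of_add_eq_add (le_antisymm (hconst i i₀) (hconst i₀ i))
  have hyc : y = fun _ => y i₀ :=
    funext fun i => hxy.eq_of_add_eq_add' (le_antisymm (hconst i i₀) (hconst i₀ i))
  rw [hxc, hyc]
  exact hf.map_const_add h0 hsub (hx i₀) (hy i₀) (hxy' i₀)

theorem map_add_of_map_add_min (hf : HorizMinAdd I f) (h0 : (0 : ℝ) ∈ I)
    (hsub : ∀ u ∈ I, ∀ v ∈ I, v ≤ u → u - v ∈ I) {x y : Fin n → ℝ} (hxy : Monovary x y)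
    (hx : ∀ i, x i ∈ I) (hy : ∀ i, y i ∈ I) (hxy' : ∀ i, x i + y i ∈ I) {i₁ i₂ : Fin n}
    (hlt : x i₂ + y i₂ < x i₁ + y i₁)
    (hlevels : ∀ i, x i + y i ≤ x i₂ + y i₂ ∨ x i + y i = x i₁ + y i₁)
    (hlow : f (fun i => min (x i) (x i₂) + min (y i) (y i₂)) =
      f (fun i => min (x i) (x i₂)) + f (fun i => min (y i) (y i₂))) :
    f (x + y) = f x + f y := by
  set T : Set (Fin n) := {i | x i₂ + y i₂ < x i + y i}
  have hT : ∀ i ∈ T, x i + y i = x i₁ + y i₁ := fun i hi => (hlevels i).resolve_left (not_le.2 hi)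
  have hTc : ∀ i ∉ T, x i + y i ≤ x i₂ + y i₂ := fun i hi => not_lt.1 hi
  have hxtop : (fun i => x i - min (x i) (x i₂)) = T.indicator fun _ => x i₁ - x i₂ :=
    sub_min_eq_indicator (hxy.le_of_add_le_add hlt.le)
      (fun i hi => hxy.eq_of_add_eq_add (hT i hi)) (fun i hi => hxy.le_of_add_le_add (hTc i hi))
  have hytop : (fun i => y i - min (y i) (y i₂)) = T.indicator fun _ => y i₁ - y i₂ :=
    sub_min_eq_indicator (hxy.le_of_add_le_add' hlt.le)
      (fun i hi => hxy.eq_of_add_eq_add' (hT i hi)) (fun i hi => hxy.le_of_add_le_add' (hTc i hi))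
  have hztop : (fun i => x i + y i - min (x i + y i) (x i₂ + y i₂)) =
      T.indicator fun _ => (x i₁ - x i₂) + (y i₁ - y i₂) := by
    rw [sub_min_eq_indicator (x := fun i => x i + y i) hlt.le hT hTc, add_sub_add_comm]
  have hs := hsub _ (hx i₁) _ (hx i₂) (hxy.le_of_add_le_add hlt.le)
  have hst := hsub _ (hxy' i₁) _ (hxy' i₂) hlt.le
  rw [add_sub_add_comm] at hst
  rw [show x + y = fun i => x i + y i from rfl, hf.map_split hsub hx (hx i₂),
    hf.map_split hsub hy (hy i₂), hf.map_split hsub hxy' (hxy' i₂),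
    ← funext fun i => hxy.min_add_min i i₂, hlow, hxtop, hytop, hztop,
    hf.map_indicator_add h0 hsub T hs hst (sub_nonneg.2 (hxy.le_of_add_le_add hlt.le))
      (sub_nonneg.2 (hxy.le_of_add_le_add' hlt.le))]
  ring

theorem map_add_of_monovary (hf : HorizMinAdd I f) (h0 : (0 : ℝ) ∈ I)
    (hsub : ∀ u ∈ I, ∀ v ∈ I, v ≤ u → u - v ∈ I) {x y : Fin n → ℝ} (hxy : Monovary x y)
    (hx : ∀ i, x i ∈ I) (hy : ∀ i, y i ∈ I) (hxy' : ∀ i, x i + y i ∈ I) :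
    f (x + y) = f x + f y := by
  induction hk : #(univ.image (x + y)) using Nat.strong_induction_on generalizing x y with
  | _ k ih =>
  by_cases hconst : ∀ i j, x i + y i ≤ x j + y j
  · exact hf.map_add_of_forall_add_le h0 hsub hxy hx hy hxy' hconst
  push Not at hconst
  obtain ⟨j, i, hij⟩ := hconst
  obtain ⟨i₁, i₂, hlt, hlevels⟩ := exists_two_largest_values (g := x + y) hij
  have hsum : (fun i => min (x i) (x i₂)) + (fun i => min (y i) (y i₂)) =
      fun i => min ((x + y) i) ((x + y) i₂) := funext fun i => hxy.min_add_min i i₂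
  refine hf.map_add_of_map_add_min h0 hsub hxy hx hy hxy' hlt hlevels (ih _ ?_ ?_
    (fun i => min_rec' (· ∈ I) (hx i) (hx i₂)) (fun i => min_rec' (· ∈ I) (hy i) (hy i₂))
    (fun i => hxy.min_add_min i i₂ ▸ min_rec' (· ∈ I) (hxy' i) (hxy' i₂)) rfl)
  · rw [hsum, ← hk]
    exact card_image_min_lt_card_image hlt
  · exact ((hxy.comp_monotone_left fun _ _ h => min_le_min_right (x i₂) h).symm.comp_monotone_left
      fun _ _ h => min_le_min_right (y i₂) h).symm

end HorizMinAdd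

theorem comonAdd_iff_horizMinAdd_general {n : ℕ} (I : Set ℝ) (hI : I.OrdConnected)
    (h0 : (0 : ℝ) ∈ I)
    (hcase : I = Set.univ ∨ I ⊆ Set.Ici 0)
    (f : (Fin n → ℝ) → ℝ) :
    ComonAdd I f ↔ HorizMinAdd I f :=
  ⟨ComonAdd.horizMinAdd, fun hf _ _ hx hy hxy hcomon =>
    hf.map_add_of_monovary h0 (fun _ hu _ hv => sub_mem_of_ordConnected hI h0 hcase hu hv)
      hcomon.monovary hx hy hxy⟩

/-- when `I = ℝ` or `0 ∈ I ⊆ [0,∞)`, comonotonic additivity is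
equivalent to horizontal min-additivity. -/
theorem comonAdd_iff_horizMinAdd {n : ℕ} (I : Set ℝ) (hI : I.OrdConnected)
    (h0 : (0 : ℝ) ∈ I) (hnt : ∃ x ∈ I, x ≠ 0)
    (hcase : I = Set.univ ∨ I ⊆ Set.Ici 0)
    (f : (Fin n → ℝ) → ℝ) :
    ComonAdd I f ↔ HorizMinAdd I f :=
  comonAdd_iff_horizMinAdd_general I hI h0 hcase f
end
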